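/- arXiv:1206.4240 — 4 statements merged into one kernel-verified Lean document; each statement's English description precedes it below -/
import Mathlib

section
/- If a ∈ ℝ, b ∈ ℝ^m with b ≠ 0, and α > 0 satisfies √(a² + |b|⁴) ≥ α, then for the Sontag feedback k = -((a + √(a² + |b|⁴))/|b|²) bᵀ and any q > 0 and disturbance d ∈ ℝ^m, one has a + b·(k - q bᵀ + d) ≤ -√(a²+|b|⁴) - q|b|² + |b||d|, and in particular a + b·(k - q bᵀ + d) ≤ -α whenever |b| ≥ |d|/q. -/
open scoped RealInnerProductSpace

/-- With the Sontag feedback `k` and ISS redesign term `-q • b`, for any disturbance `d`: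
`a + ⟪b, k - q•b + d⟫ ≤ -√(a²+‖b‖⁴) - q‖b‖² + ‖b‖‖d‖`, and whenever
`‖b‖ ≥ ‖d‖/q` and `√(a²+‖b‖⁴) ≥ α`, the quantity is `≤ -α`. -/
theorem sontag_iss_redesign {m : ℕ} (a : ℝ) (b k d : EuclideanSpace ℝ (Fin m))
    (hb : b ≠ 0) (α : ℝ) (hα : 0 < α)
    (hαle : α ≤ Real.sqrt (a ^ 2 + ‖b‖ ^ 4))
    (hk : k = -((a + Real.sqrt (a ^ 2 + ‖b‖ ^ 4)) / ‖b‖ ^ 2) • b)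
    (q : ℝ) (hq : 0 < q) :
    a + ⟪b, k - q • b + d⟫ ≤ -Real.sqrt (a ^ 2 + ‖b‖ ^ 4) - q * ‖b‖ ^ 2 + ‖b‖ * ‖d‖ ∧
      (‖d‖ / q ≤ ‖b‖ → a + ⟪b, k - q • b + d⟫ ≤ -α) := by
  have hb2 : (0:ℝ) < ‖b‖ ^ 2 := by have := norm_pos_iff.mpr hb; positivity
  have hbd : ⟪b, d⟫ ≤ ‖b‖ * ‖d‖ := real_inner_le_norm b d
  have key : a + ⟪b, k - q • b + d⟫ =
      -Real.sqrt (a ^ 2 + ‖b‖ ^ 4) - q * ‖b‖ ^ 2 + ⟪b, d⟫ := by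
    rw [hk, inner_add_right, inner_sub_right, inner_smul_right, inner_smul_right,
      real_inner_self_eq_norm_sq]
    field_simp
    ring
  constructor
  · rw [key]; linarith
  · intro h
    have hdb : ‖d‖ ≤ q * ‖b‖ := by
      rw [div_le_iff₀ hq] at h; linarith
    have : ‖b‖ * ‖d‖ ≤ q * ‖b‖ ^ 2 := by nlinarith [norm_nonneg b, norm_nonneg d]
    rw [key]; nlinarith
end

section
/- For a ∈ ℝ and b ∈ ℝ^m with 0 < |b| ≤ r, if a/|b| ≤ p (with p, r > 0), then the modified Sontag feedback k_r := -((a + √(a² + |b|⁴))/r²) bᵀ satisfies |k - k_r| ≤ 2p + r, where k = -((a + √(a² + |b|⁴))/|b|²) bᵀ is the unmodified Sontag feedback. -/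
/-- Modification error of the Sontag feedback: if `0 < ‖b‖ ≤ r` and `a/‖b‖ ≤ p`
then `‖k - k_r‖ ≤ 2p + r`, where `k` and `k_r` are the unmodified and modified
Sontag feedbacks. -/
theorem sontag_modification_error {m : ℕ} (a : ℝ) (b : EuclideanSpace ℝ (Fin m))
    (p r : ℝ) (hp : 0 < p) (hr : 0 < r) (hb : 0 < ‖b‖) (hbr : ‖b‖ ≤ r)
    (hap : a / ‖b‖ ≤ p)
    (k kr : EuclideanSpace ℝ (Fin m))
    (hk : k = -((a + Real.sqrt (a ^ 2 + ‖b‖ ^ 4)) / ‖b‖ ^ 2) • b)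
    (hkr : kr = -((a + Real.sqrt (a ^ 2 + ‖b‖ ^ 4)) / r ^ 2) • b) :
    ‖k - kr‖ ≤ 2 * p + r := by
  set B := ‖b‖ with hB
  set s := Real.sqrt (a ^ 2 + B ^ 4) with hs
  set c := a + s with hc
  have hs0 : 0 ≤ s := Real.sqrt_nonneg _
  have hsa : |a| ≤ s := by
    rw [hs]
    have : |a| = Real.sqrt (a ^ 2) := by
      rw [Real.sqrt_sq_eq_abs]
    rw [this]
    apply Real.sqrt_le_sqrt
    nlinarith [pow_pos hb 4]
  have hc0 : 0 ≤ c := by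
    have := abs_nonneg a
    have := neg_abs_le a
    nlinarith
  have hsle : s ≤ |a| + B ^ 2 := by
    rw [hs]
    have h2 : a ^ 2 + B ^ 4 ≤ (|a| + B ^ 2) ^ 2 := by
      nlinarith [abs_nonneg a, sq_abs a, sq_nonneg B]
    calc Real.sqrt (a ^ 2 + B ^ 4) ≤ Real.sqrt ((|a| + B ^ 2) ^ 2) :=
          Real.sqrt_le_sqrt h2
      _ = |a| + B ^ 2 := Real.sqrt_sq (by positivity)
  have hcle : c ≤ 2 * max a 0 + B ^ 2 := by
    rcases le_or_gt a 0 with ha | ha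
    · have : |a| = -a := abs_of_nonpos ha
      simp [hc, max_eq_right ha]
      nlinarith
    · have : |a| = a := abs_of_pos ha
      have : c ≤ 2 * a + B ^ 2 := by nlinarith
      calc c ≤ 2 * a + B ^ 2 := this
        _ ≤ 2 * max a 0 + B ^ 2 := by
            have := le_max_left a (0 : ℝ); nlinarith
  have hM : max a 0 ≤ p * B := by
    rcases le_or_gt a 0 with ha | ha
    · rw [max_eq_right ha]; positivity
    · rw [max_eq_left ha.le]
      have := (div_le_iff₀ hb).mp hap
      linarith
  -- norm computation
  have hdiff : k - kr = (c / r ^ 2 - c / B ^ 2) • b := by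
    rw [hk, hkr, ← sub_smul]
    ring_nf
  have hnorm : ‖k - kr‖ = (c / B ^ 2 - c / r ^ 2) * B := by
    rw [hdiff, norm_smul]
    have hle : c / r ^ 2 ≤ c / B ^ 2 := by
      apply div_le_div_of_nonneg_left hc0 (by positivity)
      nlinarith
    rw [Real.norm_eq_abs, abs_of_nonpos (by linarith)]
    ring
  rw [hnorm]
  clear hk hkr hdiff hnorm
  clear k kr
  clear_value B s c
  clear hB hs hc hap
  clear b
  have hkey : (c / B ^ 2 - c / r ^ 2) * B ≤ c / B := by
    have h1 : (c / B ^ 2) * B = c / B := by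
      field_simp
    have h2 : 0 ≤ (c / r ^ 2) * B := by positivity
    nlinarith
  have hfin : c / B ≤ 2 * p + r := by
    rw [div_le_iff₀ hb]
    have hB2 : B * B ≤ r * B := mul_le_mul_of_nonneg_right hbr hb.le
    have hB2' : B ^ 2 ≤ r * B := by nlinarith
    linarith
  linarith
end

section
/- For a ∈ ℝ, b ∈ ℝ^m with b ≠ 0 and the Sontag feedback k = -((a + √(a² + |b|⁴))/|b|²) bᵀ, the bound |k| ≤ (|a| + √(a² + |b|⁴))/|b| ≤ (2|a| + |b|²)/|b| holds. -/
/-- Bound on the Sontag feedback: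
`‖k‖ ≤ (|a| + √(a² + ‖b‖⁴))/‖b‖ ≤ (2|a| + ‖b‖²)/‖b‖`. -/
theorem sontag_feedback_bound {m : ℕ} (a : ℝ) (b k : EuclideanSpace ℝ (Fin m))
    (hb : b ≠ 0)
    (hk : k = -((a + Real.sqrt (a ^ 2 + ‖b‖ ^ 4)) / ‖b‖ ^ 2) • b) :
    ‖k‖ ≤ (|a| + Real.sqrt (a ^ 2 + ‖b‖ ^ 4)) / ‖b‖ ∧
      (|a| + Real.sqrt (a ^ 2 + ‖b‖ ^ 4)) / ‖b‖ ≤ (2 * |a| + ‖b‖ ^ 2) / ‖b‖ := by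
  have hb0 : (0:ℝ) < ‖b‖ := norm_pos_iff.mpr hb
  set s := Real.sqrt (a ^ 2 + ‖b‖ ^ 4) with hs
  have hs0 : 0 ≤ s := Real.sqrt_nonneg _
  have hsa : |a| ≤ s := by
    rw [hs]
    have : |a| = Real.sqrt (a ^ 2) := (Real.sqrt_sq_eq_abs a).symm
    rw [this]
    apply Real.sqrt_le_sqrt
    nlinarith [sq_nonneg ‖b‖, sq_nonneg (‖b‖^2)]
  constructor
  · rw [hk, norm_smul]
    have : ‖-((a + s) / ‖b‖ ^ 2)‖ = |a + s| / ‖b‖ ^ 2 := by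
      rw [norm_neg, Real.norm_eq_abs, abs_div, abs_of_nonneg (by positivity : (0:ℝ) ≤ ‖b‖^2)]
    rw [this]
    have h1 : |a + s| ≤ |a| + s := by
      calc |a + s| ≤ |a| + |s| := abs_add_le _ _
        _ = |a| + s := by rw [abs_of_nonneg hs0]
    rw [div_mul_eq_mul_div, div_le_div_iff₀ (by positivity) hb0]
    calc |a + s| * ‖b‖ * ‖b‖ ≤ (|a| + s) * ‖b‖ * ‖b‖ := by
          apply mul_le_mul_of_nonneg_right; apply mul_le_mul_of_nonneg_right h1 hb0.le
          exact hb0.le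
      _ = (|a| + s) * ‖b‖ ^ 2 := by ring
  · have hstep : s ≤ |a| + ‖b‖ ^ 2 := by
      rw [hs]
      have h2 : a ^ 2 + ‖b‖ ^ 4 ≤ (|a| + ‖b‖ ^ 2) ^ 2 := by
        nlinarith [abs_nonneg a, sq_nonneg ‖b‖, sq_abs a]
      calc Real.sqrt (a ^ 2 + ‖b‖ ^ 4) ≤ Real.sqrt ((|a| + ‖b‖ ^ 2) ^ 2) :=
            Real.sqrt_le_sqrt h2
        _ = |a| + ‖b‖ ^ 2 := Real.sqrt_sq (by positivity)
    rw [div_le_div_iff₀ hb0 hb0]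
    nlinarith [abs_nonneg a]
end

section
/- If a ≤ 0 whenever b = 0 (Artstein's condition), and a² + |b|⁴ ≥ α³(M)² for some α > 0, M > 0, then the Sontag-type feedback (extended by 0 when b = 0) satisfies a + b·k ≤ -α³(M) in all cases, where α³(M) denotes a fixed positive real. -/
open scoped RealInnerProductSpace
open Classical in
/-- Artstein/Sontag decrease: if `b = 0 → a ≤ 0` and `a² + ‖b‖⁴ ≥ c²` with `c > 0`,
then the Sontag feedback (extended by `0` for `b = 0`) gives `a + ⟪b,k⟫ ≤ -c`. -/
theorem sontag_decrease {m : ℕ} (a : ℝ) (b : EuclideanSpace ℝ (Fin m))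
    (c : ℝ) (hc : 0 < c) (hge : c ^ 2 ≤ a ^ 2 + ‖b‖ ^ 4)
    (hart : b = 0 → a ≤ 0)
    (k : EuclideanSpace ℝ (Fin m))
    (hk : k = if b = 0 then 0 else
      -((a + Real.sqrt (a ^ 2 + ‖b‖ ^ 4)) / ‖b‖ ^ 2) • b) :
    a + ⟪b, k⟫ ≤ -c := by
  by_cases hb : b = 0
  · subst hb
    simp only [if_pos rfl] at hk
    subst hk
    simp only [inner_zero_left, add_zero]
    have ha := hart rfl
    have : c ^ 2 ≤ a ^ 2 := by simpa using hge
    nlinarith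
  · simp only [if_neg hb] at hk
    subst hk
    rw [real_inner_smul_right, real_inner_self_eq_norm_sq]
    have hb2 : (0:ℝ) < ‖b‖ ^ 2 := pow_pos (norm_pos_iff.mpr hb) 2
    have hsq : Real.sqrt (a ^ 2 + ‖b‖ ^ 4) ≥ c := by
      rw [show c = Real.sqrt (c ^ 2) from (Real.sqrt_sq hc.le).symm]
      exact Real.sqrt_le_sqrt hge
    field_simp
    linarith
end
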